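/- arXiv:2512.13021 — 7 statements merged into one kernel-verified Lean document; each statement's English description precedes it below -/
import Mathlib

section
/- Causal factorization of block lower-triangular matrices (Lemma 1 / Theorem 1 of Aspeel et al.): Let T, p, q be natural numbers, and let K be a real matrix indexed by rows (Fin (T+1)) × (Fin p) and columns (Fin (T+1)) × (Fin q) that is block lower triangular in the time index, i.e., K ((t,a),(τ,b)) = 0 whenever τ > t. Let r = rank K. Then there exist a monotone (non-decreasing) function t : Fin r → Fin (T+1), a matrix D indexed by rows (Fin (T+1)) × (Fin p) and columns Fin r, and a matrix E indexed by rows Fin r and columns (Fin (T+1)) × (Fin q), such that K = D * E, E (k,(τ,b)) = 0 whenever τ > t k (causal encoder: message k only uses measurements up to its sending time t k), and D ((s,a),k) = 0 whenever t k > s (causal decoder: message k only affects actions at or after time t k). -/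
/-!
Grow a basis of the row space of `K` greedily in time: at each time `n`, extend the rows chosen
so far by rows of time `n` until they span all rows of time at most `n`. The chosen rows, listed
by the time at which they were added, form `E`; a chosen row of time `t k` vanishes beyond `t k`
because `K` is causal, and a row of `K` at time `s` is a combination of chosen rows of time at
most `s`, which gives the causal coefficients `D`.
-/

open Submodule Set

theorem exists_linearIndepOn_image_sublevel_subset_span {K V ι : Type*} [DivisionRing K]
    [AddCommGroup V] [Module K V] (v : ι → V) (τ : ι → ℕ) (N : ℕ) :
    ∃ s ⊆ {i | τ i < N}, LinearIndepOn K v s ∧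
      ∀ n < N, v '' {i | τ i ≤ n} ⊆ span K (v '' {i ∈ s | τ i ≤ n}) := by
  induction N with
  | zero => exact ⟨∅, empty_subset _, linearIndepOn_empty K v, by simp⟩
  | succ N ih =>
    obtain ⟨s, hsN, hs, hspan⟩ := ih
    obtain ⟨b, hbN, hsb, hbspan, hb⟩ :=
      exists_linearIndepOn_extension hs (subset_union_left (t := {i | τ i ≤ N}))
    have hb_lt : b ⊆ {i | τ i < N + 1} :=
      hbN.trans (union_subset (hsN.trans fun i hi => Nat.lt_succ_of_lt hi)
        fun i hi => Nat.lt_succ_of_le hi)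
    refine ⟨b, hb_lt, hb, fun n hn => ?_⟩
    rcases Nat.lt_succ_iff_lt_or_eq.mp hn with hn | rfl
    · exact (hspan n hn).trans (span_mono (image_mono fun i hi => ⟨hsb hi.1, hi.2⟩))
    · have hb_sub : {i ∈ b | τ i ≤ n} = b :=
        sep_eq_self_iff_mem_true.mpr fun i hi => Nat.lt_succ_iff.mp (hb_lt hi)
      rw [hb_sub]
      exact (image_mono subset_union_right).trans hbspan

theorem Fintype.exists_finEquiv_monotone_comp {α β : Type*} [Fintype α] [LinearOrder β]
    {n : ℕ} (hn : Fintype.card α = n) (f : α → β) :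
    ∃ e : Fin n ≃ α, Monotone (f ∘ e) := by
  subst hn
  let g := f ∘ (Fintype.equivFin α).symm
  exact ⟨(Tuple.sort g).trans (Fintype.equivFin α).symm, Tuple.monotone_sort g⟩

namespace Matrix

variable {m n r R : Type*}

theorem exists_eq_mul_of_row_mem_span [Semiring R] [Fintype r] (A : Matrix m n R)
    (E : Matrix r n R) (J : m → Set r) (h : ∀ i, A.row i ∈ span R (E.row '' J i)) :
    ∃ D : Matrix m r R, A = D * E ∧ ∀ i k, k ∉ J i → D i k = 0 := by
  choose l hl hA using fun i => (Finsupp.mem_span_image_iff_linearCombination R).mp (h i)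
  refine ⟨of fun i k => l i k, ?_,
    fun i k hk => Finsupp.notMem_support_iff.mp fun hk' => hk (hl i hk')⟩
  ext i j
  have hrow := congrFun (hA i) j
  rw [Finsupp.linearCombination_apply, Finsupp.sum_fintype _ _ (by simp),
    Finset.sum_apply] at hrow
  simpa [mul_apply] using hrow.symm

theorem rank_eq_card_of_linearIndepOn [Field R] [Fintype m] [Fintype n] (A : Matrix m n R)
    {s : Set m} [Fintype s] (hs : LinearIndepOn R A.row s)
    (hspan : range A.row ⊆ span R (A.row '' s)) : A.rank = Fintype.card s := by
  rw [rank_eq_finrank_span_row,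
    le_antisymm (span_le.mpr hspan) (span_mono (image_subset_range _ _)), image_eq_range,
    finrank_span_eq_card hs]

end Matrix

/-- Causal factorization of block lower-triangular matrices
(Lemma 1 / Theorem 1 of Aspeel et al.). -/
theorem causal_factorization (T p q : ℕ)
    (K : Matrix (Fin (T + 1) × Fin p) (Fin (T + 1) × Fin q) ℝ)
    (hK : ∀ (t : Fin (T + 1)) (a : Fin p) (τ : Fin (T + 1)) (b : Fin q),
      t < τ → K (t, a) (τ, b) = 0) :
    ∃ (t : Fin (K.rank) → Fin (T + 1))
      (D : Matrix (Fin (T + 1) × Fin p) (Fin (K.rank)) ℝ)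
      (E : Matrix (Fin (K.rank)) (Fin (T + 1) × Fin q) ℝ),
      Monotone t ∧
      K = D * E ∧
      (∀ (k : Fin (K.rank)) (τ : Fin (T + 1)) (b : Fin q), t k < τ → E k (τ, b) = 0) ∧
      (∀ (s : Fin (T + 1)) (a : Fin p) (k : Fin (K.rank)), s < t k → D (s, a) k = 0) := by
  classical
  obtain ⟨S, -, hS, hspan⟩ :=
    exists_linearIndepOn_image_sublevel_subset_span (K := ℝ) K.row (fun i => (i.1 : ℕ)) (T + 1)
  have hrank : K.rank = Fintype.card S := by
    refine K.rank_eq_card_of_linearIndepOn hS fun _ ⟨i, hi⟩ => ?_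
    exact span_mono (image_mono fun _ hj => hj.1)
      (hspan T T.lt_succ_self ⟨i, Nat.lt_succ_iff.mp i.1.isLt, hi⟩)
  obtain ⟨e, he⟩ := Fintype.exists_finEquiv_monotone_comp hrank.symm fun i : S => i.1.1
  let t : Fin K.rank → Fin (T + 1) := fun k => (e k).1.1
  let E := K.submatrix (fun k => (e k).1) id
  have hrow : ∀ i, K.row i ∈ span ℝ (E.row '' {k | t k ≤ i.1}) := fun i => by
    refine span_mono ?_ (hspan i.1 i.1.isLt (mem_image_of_mem _ (le_refl (i.1 : ℕ))))
    rintro _ ⟨j, ⟨hjS, hji⟩, rfl⟩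
    exact ⟨e.symm ⟨j, hjS⟩, by simpa [t] using hji, by funext x; simp [E, Matrix.row]⟩
  obtain ⟨D, hKD, hD⟩ := K.exists_eq_mul_of_row_mem_span E _ hrow
  exact ⟨t, D, E, he, hKD, fun k τ b hτ => hK _ _ _ _ hτ,
    fun s a k hk => hD _ _ (not_le.mpr hk)⟩
end

section
/- Minimal number of messages equals rank (mathematical core of Proposition 1): Let T, p, q be natural numbers, and let K be a real matrix indexed by rows (Fin (T+1)) × (Fin p) and columns (Fin (T+1)) × (Fin q) that is block lower triangular in the time index, i.e., K ((t,a),(τ,b)) = 0 whenever τ > t. Call a natural number r 'causally achievable for K' if there exist a monotone function t : Fin r → Fin (T+1), a matrix D with columns indexed by Fin r, and a matrix E with rows indexed by Fin r, such that K = D * E, E (k,(τ,b)) = 0 whenever τ > t k, and D ((s,a),k) = 0 whenever t k > s. Then the rank of K is causally achievable for K, and every causally achievable r satisfies rank K ≤ r; in other words, rank K is the minimum of the set of causally achievable numbers. -/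
/-- `r` is causally achievable for `K`: the controller `K` can be implemented with `r`
inter-agent messages via a causal encoder–decoder factorization. -/
def CausallyAchievable (T p q : ℕ)
    (K : Matrix (Fin (T + 1) × Fin p) (Fin (T + 1) × Fin q) ℝ) (r : ℕ) : Prop :=
  ∃ (t : Fin r → Fin (T + 1))
    (D : Matrix (Fin (T + 1) × Fin p) (Fin r) ℝ)
    (E : Matrix (Fin r) (Fin (T + 1) × Fin q) ℝ),
    Monotone t ∧
    K = D * E ∧
    (∀ (k : Fin r) (τ : Fin (T + 1)) (b : Fin q), t k < τ → E k (τ, b) = 0) ∧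
    (∀ (s : Fin (T + 1)) (a : Fin p) (k : Fin r), s < t k → D (s, a) k = 0)

/-!
Let `U n` be the set of columns of `K` with time index at least `T - n`; these sets increase
with `n`. Extending a linearly independent set greedily, level by level, yields a basis `s` of the
column space of `K` such that each `U n` lies in the span of `s ∩ U n`. A basis vector first
appearing at level `n` is sent at time `T - n`: it is a column of time index `≥ T - n`, so by
lower triangularity it vanishes at earlier times (causal decoder), and every column of time
index `τ` is a combination of basis vectors sent at times `≥ τ` (causal encoder). Sorting the
`rank K` basis vectors by time gives the factorization; conversely `rank (D * E) ≤ r`.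
-/

open Submodule

theorem exists_linearIndepOn_forall_subset_span_inter {𝕜 V : Type*} [DivisionRing 𝕜]
    [AddCommGroup V] [Module 𝕜 V] {U : ℕ → Set V} (hU : Monotone U) (m : ℕ) :
    ∃ s ⊆ U m, LinearIndepOn 𝕜 id s ∧ ∀ n ≤ m, U n ⊆ span 𝕜 (s ∩ U n) := by
  induction m with
  | zero =>
    obtain ⟨s, hsU, -, hUs, hs⟩ :=
      exists_linearIndepOn_id_extension (linearIndepOn_empty 𝕜 id) (Set.empty_subset (U 0))
    refine ⟨s, hsU, hs, fun n hn => ?_⟩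
    rwa [Nat.le_zero.1 hn, Set.inter_eq_left.2 hsU]
  | succ m ih =>
    obtain ⟨s, hsU, hs, hspan⟩ := ih
    obtain ⟨b, hbU, hsb, hUb, hb⟩ :=
      exists_linearIndepOn_id_extension hs (hsU.trans (hU m.le_succ))
    refine ⟨b, hbU, hb, fun n hn => ?_⟩
    rcases hn.lt_or_eq with hn | rfl
    · exact (hspan n (Nat.lt_succ_iff.1 hn)).trans
        (span_mono (Set.inter_subset_inter_left _ hsb))
    · rwa [Set.inter_eq_left.2 hbU]

theorem Matrix.exists_eq_mul_of_col_mem_span {m n ι R : Type*} [Fintype ι] [CommSemiring R]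
    (A : Matrix m n R) (b : ι → m → R) (S : n → Set ι)
    (hA : ∀ j, A.col j ∈ span R (b '' S j)) :
    ∃ E : Matrix ι n R,
      A = Matrix.of (fun x i => b i x) * E ∧ ∀ j, ∀ i ∉ S j, E i j = 0 := by
  choose l hlS hl using fun j => (Finsupp.mem_span_image_iff_linearCombination R).1 (hA j)
  refine ⟨Matrix.of fun i j => l j i, ?_, fun j => (Finsupp.mem_supported' R _).1 (hlS j)⟩
  ext x j
  rw [← Matrix.col_apply A j x, ← hl j, Finsupp.linearCombination_apply,
    Finsupp.sum_fintype _ _ (by simp)]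
  simp [Matrix.mul_apply, mul_comm]

theorem Matrix.rank_eq_card_of_linearIndepOn_s1 {m n R : Type*} [Fintype n] [Field R]
    (A : Matrix m n R) {s : Set (m → R)} [Fintype s] (hs : LinearIndepOn R id s)
    (hsA : s ⊆ Set.range A.col) (hAs : Set.range A.col ⊆ span R s) :
    A.rank = Fintype.card s := by
  rw [A.rank_eq_finrank_span_cols, le_antisymm (span_le.2 hAs) (span_mono hsA),
    finrank_span_set_eq_card hs, Set.toFinset_card]

section Causal

variable {T p q : ℕ} {K : Matrix (Fin (T + 1) × Fin p) (Fin (T + 1) × Fin q) ℝ}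

theorem causallyAchievable_card {ι : Type*} [Fintype ι] (t : ι → Fin (T + 1))
    (D : Matrix (Fin (T + 1) × Fin p) ι ℝ) (E : Matrix ι (Fin (T + 1) × Fin q) ℝ)
    (hKDE : K = D * E) (hE : ∀ k τ b, t k < τ → E k (τ, b) = 0)
    (hD : ∀ s a k, s < t k → D (s, a) k = 0) :
    CausallyAchievable T p q K (Fintype.card ι) := by
  let t' := t ∘ (Fintype.equivFin ι).symm
  let e : Fin (Fintype.card ι) ≃ ι := (Tuple.sort t').trans (Fintype.equivFin ι).symm
  refine ⟨t ∘ e, D.submatrix id e, E.submatrix e id, Tuple.monotone_sort t', ?_,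
    fun k τ b h => hE (e k) τ b h, fun s a k h => hD s a (e k) h⟩
  rw [Matrix.submatrix_mul_equiv, hKDE, Matrix.submatrix_id_id]

theorem CausallyAchievable.rank_le {r : ℕ} (h : CausallyAchievable T p q K r) : K.rank ≤ r := by
  obtain ⟨t, D, E, -, rfl, -, -⟩ := h
  exact (Matrix.rank_mul_le_right D E).trans (E.rank_le_card_height.trans_eq (Fintype.card_fin r))

theorem causallyAchievable_rank
    (hK : ∀ (t : Fin (T + 1)) (a : Fin p) (τ : Fin (T + 1)) (b : Fin q),
      t < τ → K (t, a) (τ, b) = 0) :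
    CausallyAchievable T p q K K.rank := by
  classical
  let U : ℕ → Set (Fin (T + 1) × Fin p → ℝ) := fun n => K.col '' {j | T ≤ j.1 + n}
  have hU : Monotone U := fun m n hmn =>
    Set.image_mono fun j (hj : T ≤ j.1 + m) => show T ≤ j.1 + n by omega
  have hUT : U T = Set.range K.col := by
    rw [← Set.image_univ]
    exact congrArg (K.col '' ·) (Set.eq_univ_of_forall fun j => Nat.le_add_left T j.1)
  obtain ⟨s, hsU, hs, hspan⟩ := exists_linearIndepOn_forall_subset_span_inter (𝕜 := ℝ) hU T
  have : Fintype s := (LinearIndependent.setFinite (R := ℝ) hs).fintype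
  let level : s → ℕ := fun v => Nat.find (⟨T, hsU v.2⟩ : ∃ n, ↑v ∈ U n)
  let t : s → Fin (T + 1) := fun v => ⟨T - level v, by omega⟩
  have hcol (j : Fin (T + 1) × Fin q) :
      K.col j ∈ span ℝ (Subtype.val '' {v | j.1 ≤ t v}) := by
    have hj : K.col j ∈ U (T - j.1) := ⟨j, show T ≤ j.1 + (T - j.1) by omega, rfl⟩
    refine span_mono ?_ (hspan (T - j.1) (by omega) hj)
    rintro v ⟨hvs, hvU⟩
    have : level ⟨v, hvs⟩ ≤ T - j.1 := Nat.find_min' _ hvU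
    exact ⟨⟨v, hvs⟩, show j.1 ≤ T - level ⟨v, hvs⟩ by omega, rfl⟩
  have hdecoder (k : s) (i : Fin (T + 1)) (a : Fin p) (hi : i < t k) : k.1 (i, a) = 0 := by
    obtain ⟨j, hj, hjk⟩ := Nat.find_spec (⟨T, hsU k.2⟩ : ∃ n, ↑k ∈ U n)
    have hj : T ≤ j.1 + level k := hj
    have hi : i.1 < T - level k := hi
    rw [← hjk]
    exact hK i a j.1 j.2 (Fin.lt_def.2 (by omega))
  obtain ⟨E, hKE, hE⟩ := K.exists_eq_mul_of_col_mem_span Subtype.val _ hcol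
  rw [K.rank_eq_card_of_linearIndepOn_s1 hs (hsU.trans hUT.subset)
    (hUT ▸ (hspan T le_rfl).trans (span_mono Set.inter_subset_left))]
  exact causallyAchievable_card t _ E hKE (fun k τ b h => hE (τ, b) k (not_le.2 h))
    fun i a k h => hdecoder k i a h

end Causal

/-- Minimal number of inter-agent messages equals the rank of the controller matrix
(mathematical core of Proposition 1). -/
theorem minimal_messages_eq_rank (T p q : ℕ)
    (K : Matrix (Fin (T + 1) × Fin p) (Fin (T + 1) × Fin q) ℝ)
    (hK : ∀ (t : Fin (T + 1)) (a : Fin p) (τ : Fin (T + 1)) (b : Fin q),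
      t < τ → K (t, a) (τ, b) = 0) :
    CausallyAchievable T p q K K.rank ∧
    ∀ r : ℕ, CausallyAchievable T p q K r → K.rank ≤ r :=
  ⟨causallyAchievable_rank hK, fun _ h => h.rank_le⟩
end

section
/- Algebraic core of Proposition 2 (rank bound on off-diagonal blocks of the SLS controller): Let ℝ-matrices be partitioned over sum index types: Φxx is a square matrix indexed by x₁ ⊕ x₂, Φxy a matrix from y₁ ⊕ y₂ columns to x₁ ⊕ x₂ rows, Φux a matrix from x₁ ⊕ x₂ columns to u₁ ⊕ u₂ rows, and Φuy a matrix from y₁ ⊕ y₂ columns to u₁ ⊕ u₂ rows, where x₁,x₂,u₁,u₂,y₁,y₂ are finite types. Suppose Φxx is invertible and its (1,2) block is zero, i.e., Matrix.toBlocks₁₂ Φxx = 0. Define K := Φuy − Φux * Φxx⁻¹ * Φxy. Then rank (Matrix.toBlocks₂₁ K) ≤ rank (Matrix.toBlocks₂₁ Φxx) + rank (Matrix.toBlocks₂₁ Φxy) + rank (Matrix.toBlocks₂₁ Φux) + rank (Matrix.toBlocks₂₁ Φuy), and rank (Matrix.toBlocks₁₂ K) ≤ rank (Matrix.toBlocks₁₂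 Φxy) + rank (Matrix.toBlocks₁₂ Φux) + rank (Matrix.toBlocks₁₂ Φuy). -/
open Matrix

private lemma my_rank_add_le {m n : Type*} [Fintype m] [Fintype n]
    (A B : Matrix m n ℝ) : (A + B).rank ≤ A.rank + B.rank := by
  unfold Matrix.rank
  rw [Matrix.mulVecLin_add]
  refine le_trans (Submodule.finrank_mono ?_)
    (Submodule.finrank_add_le_finrank_add_finrank _ _)
  rintro x ⟨v, rfl⟩
  exact Submodule.mem_sup.mpr ⟨A.mulVecLin v, ⟨v, rfl⟩, B.mulVecLin v, ⟨v, rfl⟩, rfl⟩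

private lemma my_rank_neg {m n : Type*} [Fintype m] [Fintype n]
    (A : Matrix m n ℝ) : (-A).rank = A.rank := by
  unfold Matrix.rank
  have h : LinearMap.range (-A).mulVecLin = LinearMap.range A.mulVecLin := by
    ext x
    simp only [LinearMap.mem_range, Matrix.mulVecLin_apply]
    constructor
    · rintro ⟨v, rfl⟩
      exact ⟨-v, by simp [Matrix.neg_mulVec, Matrix.mulVec_neg]⟩
    · rintro ⟨v, rfl⟩
      exact ⟨-v, by simp [Matrix.neg_mulVec, Matrix.mulVec_neg]⟩
  rw [h]

private lemma my_toBlocks_one₁₁ {l m : Type*} [DecidableEq l] [DecidableEq m] [Zero ℝ] :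
    (1 : Matrix (l ⊕ m) (l ⊕ m) ℝ).toBlocks₁₁ = 1 := by
  rw [← Matrix.fromBlocks_one, Matrix.toBlocks_fromBlocks₁₁]

private lemma my_toBlocks_one₁₂ {l m : Type*} [DecidableEq l] [DecidableEq m] :
    (1 : Matrix (l ⊕ m) (l ⊕ m) ℝ).toBlocks₁₂ = 0 := by
  rw [← Matrix.fromBlocks_one, Matrix.toBlocks_fromBlocks₁₂]

private lemma my_toBlocks_one₂₁ {l m : Type*} [DecidableEq l] [DecidableEq m] :
    (1 : Matrix (l ⊕ m) (l ⊕ m) ℝ).toBlocks₂₁ = 0 := by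
  rw [← Matrix.fromBlocks_one, Matrix.toBlocks_fromBlocks₂₁]

private lemma my_toBlocks_one₂₂ {l m : Type*} [DecidableEq l] [DecidableEq m] :
    (1 : Matrix (l ⊕ m) (l ⊕ m) ℝ).toBlocks₂₂ = 1 := by
  rw [← Matrix.fromBlocks_one, Matrix.toBlocks_fromBlocks₂₂]

private lemma my_rank_sub_le {m n : Type*} [Fintype m] [Fintype n]
    (A B : Matrix m n ℝ) : (A - B).rank ≤ A.rank + B.rank := by
  rw [sub_eq_add_neg]
  simpa [my_rank_neg] using my_rank_add_le A (-B)

/-- Algebraic core of Proposition 2: rank bound on off-diagonal blocks of the SLS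
controller `K = Φuy − Φux Φxx⁻¹ Φxy` when the (1,2) block of `Φxx` vanishes. -/
theorem sls_offdiagonal_rank_bound
    {x₁ x₂ u₁ u₂ y₁ y₂ : Type*}
    [Fintype x₁] [Fintype x₂] [Fintype u₁] [Fintype u₂] [Fintype y₁] [Fintype y₂]
    [DecidableEq x₁] [DecidableEq x₂]
    (Φxx : Matrix (x₁ ⊕ x₂) (x₁ ⊕ x₂) ℝ)
    (Φxy : Matrix (x₁ ⊕ x₂) (y₁ ⊕ y₂) ℝ)
    (Φux : Matrix (u₁ ⊕ u₂) (x₁ ⊕ x₂) ℝ)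
    (Φuy : Matrix (u₁ ⊕ u₂) (y₁ ⊕ y₂) ℝ)
    (hinv : IsUnit Φxx)
    (h12 : Matrix.toBlocks₁₂ Φxx = 0)
    (K : Matrix (u₁ ⊕ u₂) (y₁ ⊕ y₂) ℝ)
    (hK : K = Φuy - Φux * Φxx⁻¹ * Φxy) :
    (Matrix.toBlocks₂₁ K).rank ≤
        (Matrix.toBlocks₂₁ Φxx).rank + (Matrix.toBlocks₂₁ Φxy).rank +
        (Matrix.toBlocks₂₁ Φux).rank + (Matrix.toBlocks₂₁ Φuy).rank ∧
    (Matrix.toBlocks₁₂ K).rank ≤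
        (Matrix.toBlocks₁₂ Φxy).rank + (Matrix.toBlocks₁₂ Φux).rank +
        (Matrix.toBlocks₁₂ Φuy).rank := by
  classical
  set M := Φxx⁻¹ with hMdef
  set A := Φxx.toBlocks₁₁ with hA
  set C := Φxx.toBlocks₂₁ with hC
  set D := Φxx.toBlocks₂₂ with hD
  set P := M.toBlocks₁₁ with hP
  set Q := M.toBlocks₁₂ with hQ
  set R := M.toBlocks₂₁ with hR
  set S := M.toBlocks₂₂ with hS
  have hdet : IsUnit Φxx.det := (Matrix.isUnit_iff_isUnit_det _).mp hinv
  have hΦ : Φxx = fromBlocks A 0 C D := by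
    rw [← h12, hA, hC, hD, fromBlocks_toBlocks]
  have hM : M = fromBlocks P Q R S := (fromBlocks_toBlocks M).symm
  have hmul1 : Φxx * M = 1 := Matrix.mul_nonsing_inv Φxx hdet
  have hmul2 : M * Φxx = 1 := Matrix.nonsing_inv_mul Φxx hdet
  rw [hΦ, hM, fromBlocks_multiply, ← fromBlocks_one] at hmul1 hmul2
  -- extract block equations
  have hAP : A * P = 1 := by
    simpa [my_toBlocks_one₁₁] using congrArg Matrix.toBlocks₁₁ hmul1
  have hQD : Q * D = 0 := by
    simpa [my_toBlocks_one₁₂] using congrArg Matrix.toBlocks₁₂ hmul2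
  have f21 : R * A + S * C = 0 := by
    simpa [my_toBlocks_one₂₁] using congrArg Matrix.toBlocks₂₁ hmul2
  have hSD : S * D = 1 := by
    simpa [my_toBlocks_one₂₂] using congrArg Matrix.toBlocks₂₂ hmul2
  have hDS : D * S = 1 := mul_eq_one_comm.mp hSD
  have hQ0 : Q = 0 := by
    calc Q = Q * (D * S) := by rw [hDS, Matrix.mul_one]
    _ = (Q * D) * S := by rw [Matrix.mul_assoc]
    _ = 0 := by rw [hQD, Matrix.zero_mul]
  have hR' : R = -(S * C * P) := by
    have h2 : (R * A + S * C) * P = 0 := by rw [f21, Matrix.zero_mul]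
    rw [Matrix.add_mul, Matrix.mul_assoc, hAP, Matrix.mul_one] at h2
    exact eq_neg_of_add_eq_zero_left h2
  -- block decompositions of the remaining matrices
  set X11 := Φxy.toBlocks₁₁
  set X12 := Φxy.toBlocks₁₂
  set X21 := Φxy.toBlocks₂₁
  set X22 := Φxy.toBlocks₂₂
  set U11 := Φux.toBlocks₁₁
  set U12 := Φux.toBlocks₁₂
  set U21 := Φux.toBlocks₂₁
  set U22 := Φux.toBlocks₂₂
  set Y11 := Φuy.toBlocks₁₁
  set Y12 := Φuy.toBlocks₁₂
  set Y21 := Φuy.toBlocks₂₁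
  set Y22 := Φuy.toBlocks₂₂
  have hXy : Φxy = fromBlocks X11 X12 X21 X22 := (fromBlocks_toBlocks Φxy).symm
  have hUx : Φux = fromBlocks U11 U12 U21 U22 := (fromBlocks_toBlocks Φux).symm
  have hUy : Φuy = fromBlocks Y11 Y12 Y21 Y22 := (fromBlocks_toBlocks Φuy).symm
  have hKb : K = fromBlocks
      (Y11 - ((U11 * P + U12 * R) * X11 + (U11 * Q + U12 * S) * X21))
      (Y12 - ((U11 * P + U12 * R) * X12 + (U11 * Q + U12 * S) * X22))
      (Y21 - ((U21 * P + U22 * R) * X11 + (U21 * Q + U22 * S) * X21))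
      (Y22 - ((U21 * P + U22 * R) * X12 + (U21 * Q + U22 * S) * X22)) := by
    rw [hK, hM, hUx, hXy, hUy, fromBlocks_multiply, fromBlocks_multiply]
    rw [sub_eq_add_neg, fromBlocks_neg, fromBlocks_add]
    simp [sub_eq_add_neg]
  have hK21 : K.toBlocks₂₁
      = Y21 - (U21 * P * X11 + -(U22 * S * (C * (P * X11))) + U22 * S * X21) := by
    rw [hKb, toBlocks_fromBlocks₂₁, hQ0, hR']
    simp only [Matrix.add_mul, Matrix.mul_zero, Matrix.zero_mul, Matrix.mul_neg,
      Matrix.neg_mul, Matrix.mul_assoc, zero_add, add_zero]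
  have hK12 : K.toBlocks₁₂
      = Y12 - ((U11 * P + U12 * R) * X12 + U12 * S * X22) := by
    rw [hKb, toBlocks_fromBlocks₁₂, hQ0]
    simp
  constructor
  · rw [hK21]
    have h1 := my_rank_sub_le Y21
      (U21 * P * X11 + -(U22 * S * (C * (P * X11))) + U22 * S * X21)
    have h2 := my_rank_add_le (U21 * P * X11 + -(U22 * S * (C * (P * X11))))
      (U22 * S * X21)
    have h3 := my_rank_add_le (U21 * P * X11) (-(U22 * S * (C * (P * X11))))
    have hb1 : (U21 * P * X11).rank ≤ U21.rank :=
      le_trans (Matrix.rank_mul_le_left _ _) (Matrix.rank_mul_le_left _ _)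
    have hb2 : (-(U22 * S * (C * (P * X11)))).rank ≤ C.rank := by
      rw [my_rank_neg]
      exact le_trans (Matrix.rank_mul_le_right _ _)
        (Matrix.rank_mul_le_left _ _)
    have hb3 : (U22 * S * X21).rank ≤ X21.rank := Matrix.rank_mul_le_right _ _
    omega
  · rw [hK12]
    have h1 := my_rank_sub_le Y12 ((U11 * P + U12 * R) * X12 + U12 * S * X22)
    have h2 := my_rank_add_le ((U11 * P + U12 * R) * X12) (U12 * S * X22)
    have hb1 : ((U11 * P + U12 * R) * X12).rank ≤ X12.rank :=
      Matrix.rank_mul_le_right _ _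
    have hb2 : (U12 * S * X22).rank ≤ U12.rank :=
      le_trans (Matrix.rank_mul_le_left _ _) (Matrix.rank_mul_le_left _ _)
    omega
end

section
/- SLS achievability (part 1 of the SLS lemma): Let Ā, B̄, C̄, K be real matrices of conformal dimensions (Ā square of size nx, B̄ of size nx × nu, C̄ of size ny × nx, K of size nu × ny). Suppose the matrix 1 − Ā − B̄ * K * C̄ is invertible. Define Φxx := (1 − Ā − B̄ * K * C̄)⁻¹, Φxy := Φxx * B̄ * K, Φux := K * C̄ * Φxx, and Φuy := K + K * C̄ * Φxx * B̄ * K. Then the four affine SLS equations hold: (1 − Ā) * Φxx − B̄ * Φux = 1, (1 − Ā) * Φxy − B̄ * Φuy = 0, Φxx * (1 − Ā) − Φxy * C̄ = 1, and Φux * (1 − Ā) − Φuy * C̄ = 0. -/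
open Matrix

/-- SLS achievability (part 1 of the SLS lemma): the closed-loop maps induced by an
output-feedback controller `K` satisfy the four affine SLS equations. -/
theorem sls_achievability
    {nx nu ny : Type*} [Fintype nx] [Fintype nu] [Fintype ny] [DecidableEq nx]
    (A : Matrix nx nx ℝ) (B : Matrix nx nu ℝ) (C : Matrix ny nx ℝ)
    (K : Matrix nu ny ℝ)
    (hinv : IsUnit (1 - A - B * K * C))
    (Φxx : Matrix nx nx ℝ) (Φxy : Matrix nx ny ℝ)
    (Φux : Matrix nu nx ℝ) (Φuy : Matrix nu ny ℝ)
    (hΦxx : Φxx = (1 - A - B * K * C)⁻¹)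
    (hΦxy : Φxy = Φxx * B * K)
    (hΦux : Φux = K * C * Φxx)
    (hΦuy : Φuy = K + K * C * Φxx * B * K) :
    (1 - A) * Φxx - B * Φux = 1 ∧
    (1 - A) * Φxy - B * Φuy = 0 ∧
    Φxx * (1 - A) - Φxy * C = 1 ∧
    Φux * (1 - A) - Φuy * C = 0 := by
  have hdet : IsUnit (1 - A - B * K * C).det :=
    (isUnit_iff_isUnit_det _).mp hinv
  have h1 : (1 - A - B * K * C) * Φxx = 1 := by
    rw [hΦxx]; exact mul_nonsing_inv _ hdet
  have h2 : Φxx * (1 - A - B * K * C) = 1 := by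
    rw [hΦxx]; exact nonsing_inv_mul _ hdet
  subst hΦxy hΦux hΦuy
  have e1 : (1 - A) * Φxx - B * (K * C * Φxx) = 1 := by
    calc (1 - A) * Φxx - B * (K * C * Φxx) = (1 - A - B * K * C) * Φxx := by
          simp only [Matrix.sub_mul, Matrix.one_mul, Matrix.mul_assoc]
      _ = 1 := h1
  have e3 : Φxx * (1 - A) - Φxx * B * K * C = 1 := by
    calc Φxx * (1 - A) - Φxx * B * K * C = Φxx * (1 - A - B * K * C) := by
          simp only [Matrix.mul_sub, Matrix.mul_one, Matrix.mul_assoc]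
      _ = 1 := h2
  refine ⟨e1, ?_, e3, ?_⟩
  · calc (1 - A) * (Φxx * B * K) - B * (K + K * C * Φxx * B * K)
        = ((1 - A) * Φxx - B * (K * C * Φxx)) * (B * K) - B * K := by
          simp only [Matrix.sub_mul, Matrix.mul_sub, Matrix.mul_add, Matrix.one_mul,
            Matrix.mul_assoc]
          abel
      _ = 0 := by rw [e1]; simp
  · calc K * C * Φxx * (1 - A) - (K + K * C * Φxx * B * K) * C
        = K * C * (Φxx * (1 - A) - Φxx * B * K * C) - K * C := by
          simp only [Matrix.sub_mul, Matrix.mul_sub, Matrix.add_mul, Matrix.mul_one,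
            Matrix.mul_assoc]
          abel
      _ = 0 := by rw [e3]; simp
end

section
/- SLS realization (part 2 of the SLS lemma): Let Ā, B̄, C̄ be real matrices of conformal dimensions (Ā square of size nx, B̄ of size nx × nu, C̄ of size ny × nx), and let Φxx (size nx × nx), Φxy (size nx × ny), Φux (size nu × nx), Φuy (size nu × ny) be real matrices satisfying the four affine SLS equations (1 − Ā) * Φxx − B̄ * Φux = 1, (1 − Ā) * Φxy − B̄ * Φuy = 0, Φxx * (1 − Ā) − Φxy * C̄ = 1, and Φux * (1 − Ā) − Φuy * C̄ = 0, with Φxx invertible. Define K := Φuy − Φux * Φxx⁻¹ * Φxy. Then Φxx * (1 − Ā − B̄ * K * C̄) = 1 and (1 − Ā − B̄ * K * C̄) * Φxx = 1 (so 1 − Ā − B̄ K C̄ is invertible with inverse Φxx), and moreover Φxy = Φxx * B̄ * K, Φux = K * C̄ * Φxx, and Φuy = K + K * C̄ * Φxx * B̄ * K; that is, the controller K achieves the closed-loop response (Φxx, Φxy, Φux, Φuy). -/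
open Matrix

/-- SLS realization (part 2 of the SLS lemma): any solution of the four affine SLS
equations with `Φxx` invertible is achieved by the controller
`K = Φuy − Φux Φxx⁻¹ Φxy`. -/
theorem sls_realization
    {nx nu ny : Type*} [Fintype nx] [Fintype nu] [Fintype ny] [DecidableEq nx]
    (A : Matrix nx nx ℝ) (B : Matrix nx nu ℝ) (C : Matrix ny nx ℝ)
    (Φxx : Matrix nx nx ℝ) (Φxy : Matrix nx ny ℝ)
    (Φux : Matrix nu nx ℝ) (Φuy : Matrix nu ny ℝ)
    (h1 : (1 - A) * Φxx - B * Φux = 1)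
    (h2 : (1 - A) * Φxy - B * Φuy = 0)
    (h3 : Φxx * (1 - A) - Φxy * C = 1)
    (h4 : Φux * (1 - A) - Φuy * C = 0)
    (hinv : IsUnit Φxx)
    (K : Matrix nu ny ℝ)
    (hK : K = Φuy - Φux * Φxx⁻¹ * Φxy) :
    Φxx * (1 - A - B * K * C) = 1 ∧
    (1 - A - B * K * C) * Φxx = 1 ∧
    Φxy = Φxx * B * K ∧
    Φux = K * C * Φxx ∧
    Φuy = K + K * C * Φxx * B * K := by
  have hd : IsUnit Φxx.det := (Matrix.isUnit_iff_isUnit_det _).mp hinv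
  have hX1 : Φxx⁻¹ * Φxx = 1 := Matrix.nonsing_inv_mul Φxx hd
  have hX2 : Φxx * Φxx⁻¹ = 1 := Matrix.mul_nonsing_inv Φxx hd
  have e1 : B * Φux = (1 - A) * Φxx - 1 := by
    rw [sub_eq_iff_eq_add.mp h1]; abel
  have e2 : B * Φuy = (1 - A) * Φxy := (sub_eq_zero.mp h2).symm
  have e3 : Φxy * C = Φxx * (1 - A) - 1 := by
    rw [sub_eq_iff_eq_add.mp h3]; abel
  have e4 : Φuy * C = Φux * (1 - A) := (sub_eq_zero.mp h4).symm
  have hux : K * C * Φxx = Φux := by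
    calc K * C * Φxx
        = Φuy * C * Φxx - Φux * (Φxx⁻¹ * ((Φxy * C) * Φxx)) := by
          rw [hK]
          simp only [Matrix.sub_mul, Matrix.mul_assoc]
      _ = Φux * (1 - A) * Φxx - Φux * (Φxx⁻¹ * ((Φxx * (1 - A) - 1) * Φxx)) := by
          rw [e3, e4]
      _ = Φux * ((1 - A) * Φxx) - (Φux * ((Φxx⁻¹ * Φxx) * ((1 - A) * Φxx))
          - Φux * (Φxx⁻¹ * Φxx)) := by
          simp only [Matrix.sub_mul, Matrix.mul_sub, Matrix.one_mul, Matrix.mul_one,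
            Matrix.mul_assoc]
      _ = Φux := by
          rw [hX1]
          simp only [Matrix.one_mul, Matrix.mul_one]
          abel
  have hxy : Φxx * B * K = Φxy := by
    calc Φxx * B * K
        = Φxx * (B * Φuy) - Φxx * ((B * Φux) * (Φxx⁻¹ * Φxy)) := by
          rw [hK]
          simp only [Matrix.mul_sub, Matrix.mul_assoc]
      _ = Φxx * ((1 - A) * Φxy) - Φxx * (((1 - A) * Φxx - 1) * (Φxx⁻¹ * Φxy)) := by
          rw [e1, e2]
      _ = Φxx * ((1 - A) * Φxy) - (Φxx * ((1 - A) * ((Φxx * Φxx⁻¹) * Φxy))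
          - (Φxx * Φxx⁻¹) * Φxy) := by
          simp only [Matrix.sub_mul, Matrix.mul_sub, Matrix.one_mul, Matrix.mul_one,
            Matrix.mul_assoc]
      _ = Φxy := by
          rw [hX2]
          simp only [Matrix.one_mul, Matrix.mul_one]
          abel
  refine ⟨?_, ?_, hxy.symm, hux.symm, ?_⟩
  · calc Φxx * (1 - A - B * K * C)
        = Φxx * (1 - A) - (Φxx * B * K) * C := by
          simp only [Matrix.mul_sub, Matrix.mul_one, Matrix.mul_assoc]
      _ = 1 := by rw [hxy]; exact h3
  · calc (1 - A - B * K * C) * Φxx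
        = (1 - A) * Φxx - B * (K * C * Φxx) := by
          simp only [Matrix.sub_mul, Matrix.one_mul, Matrix.mul_assoc]
      _ = 1 := by rw [hux]; exact h1
  · have h5 : Φuy = K + Φux * Φxx⁻¹ * Φxy := by rw [hK]; abel
    calc Φuy
        = K + Φux * (Φxx⁻¹ * (Φxx * B * K)) := by
          rw [h5, ← hxy]
          simp only [Matrix.mul_assoc]
      _ = K + Φux * ((Φxx⁻¹ * Φxx) * (B * K)) := by
          simp only [Matrix.mul_assoc]
      _ = K + K * C * Φxx * B * K := by
          rw [hX1, Matrix.one_mul, ← hux]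
          simp only [Matrix.mul_assoc]
end

section
/- Closed-loop response formula: Let Ā, B̄, C̄, K be real matrices of conformal dimensions such that 1 − Ā − B̄ * K * C̄ is invertible, and define Φxx := (1 − Ā − B̄ * K * C̄)⁻¹, Φxy := Φxx * B̄ * K, Φux := K * C̄ * Φxx, Φuy := K + K * C̄ * Φxx * B̄ * K. Then for any vectors x, u, y, w, v satisfying the closed-loop equations x = Ā x + B̄ u + w, y = C̄ x + v, and u = K y (interpreting matrix–vector products), one has x = Φxx w + Φxy v and u = Φux w + Φuy v. -/
open Matrix

/-- Closed-loop response formula: under the controller `u = K y`, the closed-loop state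
and input are given by the SLS parameters applied to the disturbance and noise. -/
theorem closed_loop_response
    {nx nu ny : Type*} [Fintype nx] [Fintype nu] [Fintype ny] [DecidableEq nx]
    (A : Matrix nx nx ℝ) (B : Matrix nx nu ℝ) (C : Matrix ny nx ℝ)
    (K : Matrix nu ny ℝ)
    (hinv : IsUnit (1 - A - B * K * C))
    (Φxx : Matrix nx nx ℝ) (Φxy : Matrix nx ny ℝ)
    (Φux : Matrix nu nx ℝ) (Φuy : Matrix nu ny ℝ)
    (hΦxx : Φxx = (1 - A - B * K * C)⁻¹)
    (hΦxy : Φxy = Φxx * B * K)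
    (hΦux : Φux = K * C * Φxx)
    (hΦuy : Φuy = K + K * C * Φxx * B * K)
    (x w : nx → ℝ) (u : nu → ℝ) (y v : ny → ℝ)
    (hx : x = A.mulVec x + B.mulVec u + w)
    (hy : y = C.mulVec x + v)
    (hu : u = K.mulVec y) :
    x = Φxx.mulVec w + Φxy.mulVec v ∧
    u = Φux.mulVec w + Φuy.mulVec v := by
  have hdet : IsUnit (1 - A - B * K * C).det :=
    (Matrix.isUnit_iff_isUnit_det _).mp hinv
  have hΦM : Φxx * (1 - A - B * K * C) = 1 := by
    rw [hΦxx]; exact Matrix.nonsing_inv_mul _ hdet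
  -- u = K C x + K v
  have hu' : u = (K * C).mulVec x + K.mulVec v := by
    rw [hu, hy, Matrix.mulVec_add, Matrix.mulVec_mulVec]
  -- (1 - A - B K C) x = w + (B*K) v
  have hM : (1 - A - B * K * C).mulVec x = w + (B * K).mulVec v := by
    have h1 : x = A.mulVec x + (B * K * C).mulVec x + (B * K).mulVec v + w := by
      nth_rewrite 1 [hx]
      rw [hu', Matrix.mulVec_add, Matrix.mulVec_mulVec, Matrix.mulVec_mulVec,
        ← Matrix.mul_assoc]
      abel
    rw [Matrix.sub_mulVec, Matrix.sub_mulVec, Matrix.one_mulVec]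
    nth_rewrite 1 [h1]
    abel
  have hxw : x = Φxx.mulVec w + (Φxx * (B * K)).mulVec v := by
    have := congrArg (fun z => Φxx.mulVec z) hM
    simpa [Matrix.mulVec_mulVec, hΦM, Matrix.one_mulVec, Matrix.mulVec_add] using this
  constructor
  · rw [hxw, hΦxy, Matrix.mul_assoc]
  · rw [hu', hxw, hΦux, hΦuy]
    simp [Matrix.mulVec_add, Matrix.mulVec_mulVec, Matrix.add_mulVec, Matrix.mul_assoc]
    abel
end

section
/- Triangularity of the closed-loop SLS parameters: Let ι_x, ι_u, ι_y be finite types with gradings b_x : ι_x → Fin (T+1), b_u : ι_u → Fin (T+1), b_y : ι_y → Fin (T+1). Let Ā (square on ι_x) and B̄ (rows ι_x, columns ι_u) be strictly block lower triangular in time (Ā i j = 0 whenever b_x j ≥ b_x i, and B̄ i j = 0 whenever b_u j ≥ b_x i), let C̄ (rows ι_y, columns ι_x) be block diagonal in time (C̄ i j = 0 whenever b_x j ≠ b_y i), and let K (rows ι_u, columns ι_y) be block lower triangular in time (K i j = 0 whenever b_y j > b_u i). Then the matrix 1 − Ā − B̄ * K * C̄ is invertible, and the matrices Φxx := (1 −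 Ā − B̄ * K * C̄)⁻¹, Φux := K * C̄ * Φxx, and Φuy := K + K * C̄ * Φxx * B̄ * K are block lower triangular in time (entries vanish whenever the column grade strictly exceeds the row grade), while Φxy := Φxx * B̄ * K is strictly block lower triangular in time (entries vanish whenever the column grade is greater than or equal to the row grade). -/
/-!
A matrix that is strictly lower triangular for a grading by a linearly ordered set has zero
diagonal blocks, so `1 - M` is block triangular with identity diagonal blocks and has determinant
`1`. The inverse of a block triangular matrix is block triangular, and (strict) lower
triangularity is stable under products, which gives the triangularity of all four closed-loop
maps.
-/

open Matrix OrderDual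

namespace Matrix

variable {m n o R α : Type*} [LinearOrder α]

def BlockLowerTriangular [Zero R] (r : m → α) (c : n → α) (M : Matrix m n R) : Prop :=
  ∀ i j, r i < c j → M i j = 0

def StrictBlockLowerTriangular [Zero R] (r : m → α) (c : n → α) (M : Matrix m n R) : Prop :=
  ∀ i j, r i ≤ c j → M i j = 0

section Mul

variable [Fintype n] [NonUnitalNonAssocSemiring R] {r : m → α} {c : n → α} {d : o → α}
  {M : Matrix m n R} {N : Matrix n o R}

theorem mul_apply_eq_zero_of_forall {i : m} {j : o} (h : ∀ k, M i k = 0 ∨ N k j = 0) :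
    (M * N) i j = 0 :=
  Finset.sum_eq_zero fun k _ => (h k).elim (mul_eq_zero_of_left · _) (mul_eq_zero_of_right _ ·)

theorem BlockLowerTriangular.mul (hM : BlockLowerTriangular r c M)
    (hN : BlockLowerTriangular c d N) : BlockLowerTriangular r d (M * N) :=
  fun i j hij => mul_apply_eq_zero_of_forall fun k =>
    (lt_or_ge (r i) (c k)).imp (hM i k) fun hk => hN k j (hk.trans_lt hij)

theorem BlockLowerTriangular.mul_strict (hM : BlockLowerTriangular r c M)
    (hN : StrictBlockLowerTriangular c d N) : StrictBlockLowerTriangular r d (M * N) :=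
  fun i j hij => mul_apply_eq_zero_of_forall fun k =>
    (lt_or_ge (r i) (c k)).imp (hM i k) fun hk => hN k j (hk.trans hij)

theorem StrictBlockLowerTriangular.mul_blockLower (hM : StrictBlockLowerTriangular r c M)
    (hN : BlockLowerTriangular c d N) : StrictBlockLowerTriangular r d (M * N) :=
  fun i j hij => mul_apply_eq_zero_of_forall fun k =>
    (le_or_gt (r i) (c k)).imp (hM i k) fun hk => hN k j (hk.trans_le hij)

end Mul

section Add

variable [AddZeroClass R] {r : m → α} {c : n → α} {M N : Matrix m n R}

theorem BlockLowerTriangular.add (hM : BlockLowerTriangular r c M)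
    (hN : BlockLowerTriangular r c N) : BlockLowerTriangular r c (M + N) :=
  fun i j hij => by rw [add_apply, hM i j hij, hN i j hij, add_zero]

theorem StrictBlockLowerTriangular.add (hM : StrictBlockLowerTriangular r c M)
    (hN : StrictBlockLowerTriangular r c N) : StrictBlockLowerTriangular r c (M + N) :=
  fun i j hij => by rw [add_apply, hM i j hij, hN i j hij, add_zero]

theorem StrictBlockLowerTriangular.blockLower (hM : StrictBlockLowerTriangular r c M) :
    BlockLowerTriangular r c M :=
  fun i j hij => hM i j hij.le

end Add

section Square

variable {b : m → α} {M : Matrix m m R}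

theorem blockLowerTriangular_iff_blockTriangular [Zero R] :
    BlockLowerTriangular b b M ↔ BlockTriangular M (toDual ∘ b) :=
  Iff.rfl

theorem StrictBlockLowerTriangular.one_sub [DecidableEq m] [AddGroupWithOne R]
    (hM : StrictBlockLowerTriangular b b M) : BlockLowerTriangular b b (1 - M) :=
  fun i j hij => by
    rw [sub_apply, one_apply_ne (fun h => hij.ne (congrArg b h)), hM i j hij.le, sub_zero]

variable [Fintype m] [DecidableEq m] [CommRing R]

theorem StrictBlockLowerTriangular.det_one_sub (hM : StrictBlockLowerTriangular b b M) :
    (1 - M).det = 1 := by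
  rw [(blockLowerTriangular_iff_blockTriangular.1 hM.one_sub).det]
  refine Finset.prod_eq_one fun a _ => ?_
  have hblock : (1 - M).toSquareBlock (toDual ∘ b) a = 1 := by
    ext i j
    have hij : b i = b j := toDual.injective (i.2.trans j.2.symm)
    simp [toSquareBlock_def, one_apply, Subtype.ext_iff, hM i j hij.le]
  rw [hblock, det_one]

/-- The inverse is taken in the sense of `Matrix.inv`, so a singular `M` has `M⁻¹ = 0`. -/
theorem BlockLowerTriangular.inv (hM : BlockLowerTriangular b b M) :
    BlockLowerTriangular b b M⁻¹ := by
  rw [blockLowerTriangular_iff_blockTriangular] at hM ⊢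
  by_cases h : IsUnit M.det
  · have := M.invertibleOfIsUnitDet h
    exact blockTriangular_inv_of_blockTriangular hM
  · rw [nonsing_inv_apply_not_isUnit M h]
    exact blockTriangular_zero

end Square

end Matrix

/-- Triangularity of the closed-loop SLS parameters: with `Ā`, `B̄` strictly block lower
triangular in time, `C̄` block diagonal in time, and `K` block lower triangular in time,
the matrix `1 − Ā − B̄ K C̄` is invertible, `Φxx`, `Φux`, `Φuy` are block lower
triangular in time, and `Φxy` is strictly block lower triangular in time. -/
theorem sls_closed_loop_triangular
    {T : ℕ} {ιx ιu ιy : Type*} [Fintype ιx] [Fintype ιu] [Fintype ιy] [DecidableEq ιx]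
    (bx : ιx → Fin (T + 1)) (bu : ιu → Fin (T + 1)) (bY : ιy → Fin (T + 1))
    (A : Matrix ιx ιx ℝ) (B : Matrix ιx ιu ℝ) (C : Matrix ιy ιx ℝ)
    (K : Matrix ιu ιy ℝ)
    (hA : ∀ i j, bx i ≤ bx j → A i j = 0)
    (hB : ∀ i j, bx i ≤ bu j → B i j = 0)
    (hC : ∀ i j, bx j ≠ bY i → C i j = 0)
    (hK : ∀ i j, bu i < bY j → K i j = 0)
    (Φxx : Matrix ιx ιx ℝ) (Φxy : Matrix ιx ιy ℝ)
    (Φux : Matrix ιu ιx ℝ) (Φuy : Matrix ιu ιy ℝ)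
    (hΦxx : Φxx = (1 - A - B * K * C)⁻¹)
    (hΦxy : Φxy = Φxx * B * K)
    (hΦux : Φux = K * C * Φxx)
    (hΦuy : Φuy = K + K * C * Φxx * B * K) :
    IsUnit (1 - A - B * K * C) ∧
    (∀ i j, bx i < bx j → Φxx i j = 0) ∧
    (∀ i j, bu i < bx j → Φux i j = 0) ∧
    (∀ i j, bu i < bY j → Φuy i j = 0) ∧
    (∀ i j, bx i ≤ bY j → Φxy i j = 0) := by
  have hK : BlockLowerTriangular bu bY K := hK
  have hC : BlockLowerTriangular bY bx C := fun i j h => hC i j h.ne'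
  have hM : StrictBlockLowerTriangular bx bx (A + B * K * C) :=
    StrictBlockLowerTriangular.add hA
      ((StrictBlockLowerTriangular.mul_blockLower hB hK).mul_blockLower hC)
  have hsub : 1 - A - B * K * C = 1 - (A + B * K * C) := sub_sub _ _ _
  have hΦxxL : BlockLowerTriangular bx bx Φxx := by
    rw [hΦxx, hsub]
    exact hM.one_sub.inv
  have hKCΦ : BlockLowerTriangular bu bx (K * C * Φxx) := (hK.mul hC).mul hΦxxL
  refine ⟨?_, hΦxxL, hΦux ▸ hKCΦ, ?_, hΦxy ▸ (hΦxxL.mul_strict hB).mul_blockLower hK⟩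
  · rw [hsub, isUnit_iff_isUnit_det, hM.det_one_sub]
    exact isUnit_one
  · rw [hΦuy]
    exact hK.add ((hKCΦ.mul_strict hB).mul_blockLower hK).blockLower
end
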